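/- For every ℂ-algebra isomorphism φ : Cl ≃ Matrix (Fin 2^r) ℂ, with Φ the induced isomorphism Cl ⊗ Cl ≃ Matrix ((Fin 2^r) × (Fin 2^r)) ℂ given by the Kronecker product Φ(a⊗b) = φ(a)⊗φ(b), the following trace formulas hold: Tr Φ(Ĉ^2) = 4^r·r(2r−1)/(256(r−1)^2), Tr Φ(Ĉ^3) = −4^r·r(2r−1)/(1024(r−1)^2), Tr Φ(Ĉ^4) = 4^r·r(2r−1)(30r^2−63r+34)/(2^{16}(r−1)^4), and Tr Φ(Ĉ^5) = −4^r·r(2r−1)(34r^2−89r+62)/(2^{17}(r−1)^4). -/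

import Mathlib

open scoped TensorProduct

noncomputable section

/-- The quadratic form `x₁² + ⋯ + x_{2r}²` on `ℂ^{2r}`. -/
def Qf (r : ℕ) : QuadraticForm ℂ (Fin (2*r) → ℂ) :=
  QuadraticMap.weightedSumSquares ℂ (fun _ : Fin (2*r) => (1:ℂ))

/-- The Clifford algebra of `Qf r`. -/
abbrev Cl (r : ℕ) := CliffordAlgebra (Qf r)

/-- The generators `Γ_i`. -/
def Γgen (r : ℕ) (i : Fin (2*r)) : Cl r :=
  CliffordAlgebra.ι (Qf r) (Pi.single i 1)

/-- The antisymmetrised products `Γ_{[i₁…i_k]}`. -/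
def Γbr (r k : ℕ) (i : Fin k → Fin (2*r)) : Cl r :=
  ((k.factorial : ℂ))⁻¹ •
    ∑ σ : Equiv.Perm (Fin k),
      ((Equiv.Perm.sign σ : ℤ) : ℂ) • (List.ofFn fun j => Γgen r (i (σ j))).prod

/-- The invariants `I_k ∈ Cl ⊗ Cl`. -/
def Ik (r k : ℕ) : Cl r ⊗[ℂ] Cl r :=
  ∑ i : Fin k → Fin (2*r), (Γbr r k i) ⊗ₜ[ℂ] (Γbr r k i)

/-- The split Casimir element `Ĉ = −I₂/(16(2r−2))`. -/
def sC (r : ℕ) : Cl r ⊗[ℂ] Cl r := (-(16*(2*(r:ℂ)-2))⁻¹) • Ik r 2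

/-- The top element `Γ_{2r+1} = (−i)^r Γ₁⋯Γ_{2r}`. -/
def Γtop (r : ℕ) : Cl r :=
  ((-Complex.I)^r) • (List.ofFn fun i : Fin (2*r) => Γgen r i).prod

/-- The chirality projector `p_ε = (1 + ε Γ_{2r+1})/2`. -/
def pCh (r : ℕ) (ε : ℂ) : Cl r := (2:ℂ)⁻¹ • (1 + ε • Γtop r)

/-- The chirality projectors `p_{εε'} = p_ε ⊗ p_{ε'}`. -/
def ppCh (r : ℕ) (ε ε' : ℂ) : Cl r ⊗[ℂ] Cl r := (pCh r ε) ⊗ₜ[ℂ] (pCh r ε')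

/-- The eigenvalues `c_k = (2k(2r−k) − r(2r−1))/(16(r−1))`. -/
def cEv (r k : ℕ) : ℂ :=
  (2*(k:ℂ)*(2*(r:ℂ)-(k:ℂ)) - (r:ℂ)*(2*(r:ℂ)-1)) / (16*((r:ℂ)-1))

/-- The spectral projectors `P_k = Π_{j≠k} (Ĉ − c_j)/(c_k − c_j)`. -/
def Pk (r k : ℕ) : Cl r ⊗[ℂ] Cl r :=
  (((List.range (r+1)).filter (fun j => j ≠ k)).map
    (fun j => (cEv r k - cEv r j)⁻¹ • (sC r - cEv r j • 1))).prod

/-- `P_r^S = (p_{++} + p_{−−})·P_r`. -/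
def PrS (r : ℕ) : Cl r ⊗[ℂ] Cl r := (ppCh r 1 1 + ppCh r (-1) (-1)) * Pk r r

/-- The ascending factorial `a_k(u) = (u/2)(u/2+1)⋯(u/2+k−1)`. -/
def asc (u : ℂ) (k : ℕ) : ℂ := ∏ j ∈ Finset.range k, (u/2 + (j:ℂ))

/-!
Put `K = I₁ = ∑ᵢ Γᵢ ⊗ Γᵢ`. Since `Γ_{[ij]} = ΓᵢΓⱼ - δᵢⱼ`, one has `I₂ = K² - 2r`, so `Ĉ` is a
polynomial in `K` and everything reduces to the traces of the powers `K^m`. Expanding `K^m` gives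
a sum over words `w` of length `m` in the letters `1, …, 2r` of products of the commuting
involutions `Γᵢ ⊗ Γᵢ`. If every letter occurs in `w` an even number of times the product is `1`;
otherwise the trace of `Γ_{w₁}⋯Γ_{w_m}` vanishes, because conjugating by a suitable `Γ_b` changes
its sign. Hence `Tr Φ(K^m) = 4^r · E(m, 2r)`, where `E(m, N)` counts the words of length `m` over
`N` letters with all multiplicities even. Averaging over signs `ε ∈ {±1}^N` gives
`2^N E(m, N) = ∑_ε (ε₁ + ⋯ + ε_N)^m`, and splitting off the last sign yields a recursion in `N`
which makes `E(m, N)` an explicit polynomial in `N` for each even `m ≤ 10`.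
-/

open Finset

theorem List.count_ofFn {α : Type*} [DecidableEq α] {m : ℕ} (w : Fin m → α) (a : α) :
    (List.ofFn w).count a = #{t | w t = a} := by
  rw [← Multiset.coe_count, ← Fin.univ_val_map, Multiset.count_map]
  simp [Finset.card, Finset.filter_val, eq_comm]

theorem List.sum_count_eq_length {α : Type*} [DecidableEq α] [Fintype α] (l : List α) :
    ∑ a, l.count a = l.length := by
  simpa using Multiset.sum_count_eq_card (s := univ) (m := (l : Multiset α)) (by simp)

theorem List.prod_map_eq_one_of_forall_even_count {ι M : Type*} [DecidableEq ι] [Monoid M]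
    {x : ι → M} (hcomm : ∀ i j, Commute (x i) (x j)) (hsq : ∀ i, x i * x i = 1) :
    ∀ l : List ι, (∀ i, Even (l.count i)) → (l.map x).prod = 1
  | [], _ => rfl
  | a :: t, heven => by
    have hat : a ∈ t := by
      have := heven a
      rw [List.count_cons_self, Nat.even_add_one, Nat.not_even_iff_odd] at this
      exact List.count_pos_iff.1 this.pos
    have herase : ∀ i, Even ((t.erase a).count i) := fun i => by
      rcases eq_or_ne i a with rfl | hia
      · have := heven i
        rw [List.count_cons_self, Nat.even_iff] at this
        rw [List.count_erase_self, Nat.even_iff]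
        omega
      · simpa [List.count_erase_of_ne hia, List.count_cons_of_ne (Ne.symm hia)] using heven i
    have hperm : (t.map x).prod = x a * ((t.erase a).map x).prod :=
      ((List.perm_cons_erase hat).map x).prod_eq'
        (List.pairwise_map.2 (List.pairwise_of_forall hcomm))
    rw [List.map_cons, List.prod_cons, hperm, ← mul_assoc, hsq, one_mul,
      List.prod_map_eq_one_of_forall_even_count hcomm hsq _ herase]
termination_by l => l.length
decreasing_by simp [List.length_erase_of_mem hat]

theorem Fintype.sum_pow_eq_sum_prod_map_ofFn {ι R : Type*} [Fintype ι] [Semiring R] (f : ι → R) :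
    ∀ m : ℕ, (∑ i, f i) ^ m = ∑ w : Fin m → ι, ((List.ofFn w).map f).prod
  | 0 => by simp
  | m + 1 => by
    rw [pow_succ', Fintype.sum_pow_eq_sum_prod_map_ofFn f m, Finset.sum_mul_sum,
      ← Fintype.sum_prod_type', ← (Fin.consEquiv fun _ => ι).sum_comp]
    simp [List.ofFn_succ]

theorem LinearMap.map_add_algebraMap_pow {R A M : Type*} [CommSemiring R] [Semiring A]
    [Algebra R A] [AddCommMonoid M] [Module R M] (T : A →ₗ[R] M) (a : A) (d : R) (n : ℕ) :
    T ((a + algebraMap R A d) ^ n)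
      = ∑ m ∈ Finset.range (n + 1), (d ^ (n - m) * n.choose m) • T (a ^ m) := by
  rw [(Algebra.commute_algebraMap_right d a).add_pow, map_sum]
  refine sum_congr rfl fun m _ => ?_
  rw [← map_pow, ← map_natCast (algebraMap R A), mul_assoc, ← map_mul, ← Algebra.commutes,
    ← Algebra.smul_def, map_smul]

def evenWordCount (m N : ℕ) : ℕ := #{w : Fin m → Fin N | ∀ i, Even #{t | w t = i}}

theorem sum_neg_one_pow_pow_fin_two (c : ℕ) :
    ∑ k : Fin 2, ((-1 : ℤ) ^ (k : ℕ)) ^ c = if Even c then 2 else 0 := by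
  rcases Nat.even_or_odd c with hc | hc
  · simp [hc, hc.neg_one_pow]
  · simp [Nat.not_even_iff_odd.2 hc, hc.neg_one_pow]

theorem sum_prod_neg_one_pow_eq_ite {m N : ℕ} (w : Fin m → Fin N) :
    ∑ ε : Fin N → Fin 2, ∏ t, (-1 : ℤ) ^ (ε (w t) : ℕ)
      = if ∀ i, Even #{t | w t = i} then 2 ^ N else 0 := by
  have hfiber : ∀ ε : Fin N → Fin 2,
      ∏ t, (-1 : ℤ) ^ (ε (w t) : ℕ) = ∏ i, ((-1 : ℤ) ^ (ε i : ℕ)) ^ #{t | w t = i} := fun ε => by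
    rw [← prod_fiberwise univ w]
    refine prod_congr rfl fun i _ => ?_
    rw [prod_congr rfl fun t ht => by rw [(mem_filter.1 ht).2], prod_const]
  simp_rw [hfiber, ← Fintype.prod_sum fun i (k : Fin 2) => ((-1 : ℤ) ^ (k : ℕ)) ^ #{t | w t = i},
    sum_neg_one_pow_pow_fin_two, prod_ite_zero, prod_const, card_univ, Fintype.card_fin, mem_univ,
    true_implies]

theorem two_pow_mul_evenWordCount (m N : ℕ) :
    2 ^ N * (evenWordCount m N : ℤ) = ∑ ε : Fin N → Fin 2, (∑ i, (-1 : ℤ) ^ (ε i : ℕ)) ^ m := by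
  simp_rw [Fintype.sum_pow]
  rw [sum_comm]
  simp_rw [sum_prod_neg_one_pow_eq_ite]
  rw [evenWordCount, ← sum_boole, mul_sum]
  simp_rw [mul_ite, mul_one, mul_zero]

theorem sum_sign_sum_pow_succ (m N : ℕ) :
    ∑ ε : Fin (N + 1) → Fin 2, (∑ i, (-1 : ℤ) ^ (ε i : ℕ)) ^ m
      = ∑ j ∈ range (m + 1), (if Even (m - j) then 2 else 0) * m.choose j
          * ∑ ε : Fin N → Fin 2, (∑ i, (-1 : ℤ) ^ (ε i : ℕ)) ^ j := by
  have hbinom : ∀ s : ℤ, (1 + s) ^ m + (-1 + s) ^ m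
      = ∑ j ∈ range (m + 1), (if Even (m - j) then 2 else 0) * m.choose j * s ^ j := fun s => by
    rw [add_comm 1, add_comm (-1), add_pow, add_pow, ← sum_add_distrib]
    refine sum_congr rfl fun j _ => ?_
    rcases Nat.even_or_odd (m - j) with h | h
    · rw [if_pos h, h.neg_one_pow]; ring
    · rw [if_neg (Nat.not_even_iff_odd.2 h), h.neg_one_pow]; ring
  rw [← (Fin.consEquiv fun _ => Fin 2).sum_comp, Fintype.sum_prod_type, Fin.sum_univ_two,
    ← sum_add_distrib]
  simp_rw [mul_sum, sum_comm (γ := ℕ)]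
  refine sum_congr rfl fun ε _ => ?_
  simp only [Fin.consEquiv, Equiv.coe_fn_mk, Fin.sum_univ_succ, Fin.cons_zero, Fin.cons_succ,
    Fin.val_zero, Fin.val_one, pow_zero, pow_one, hbinom]

theorem evenWordCount_succ (m N : ℕ) :
    evenWordCount m (N + 1)
      = ∑ j ∈ range (m + 1), if Even (m - j) then m.choose j * evenWordCount j N else 0 := by
  apply Nat.cast_injective (R := ℤ)
  apply mul_left_cancel₀ (pow_ne_zero (N + 1) (two_ne_zero : (2 : ℤ) ≠ 0))
  rw [two_pow_mul_evenWordCount, sum_sign_sum_pow_succ, Nat.cast_sum, mul_sum]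
  refine sum_congr rfl fun j _ => ?_
  rw [← two_pow_mul_evenWordCount]
  split_ifs <;> push_cast <;> ring

theorem evenWordCount_zero_left (N : ℕ) : evenWordCount 0 N = 1 := by
  simp [evenWordCount]

theorem evenWordCount_succ_zero (m : ℕ) : evenWordCount (m + 1) 0 = 0 := by
  simp [evenWordCount]

section ClosedForms

variable {R : Type*} [CommRing R]

theorem evenWordCount_two (N : ℕ) : (evenWordCount 2 N : R) = N := by
  induction N with
  | zero => simp [evenWordCount_succ_zero]
  | succ N ih =>
    rw [evenWordCount_succ]
    norm_num [sum_range_succ, Nat.choose, evenWordCount_zero_left, ih]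
    ring

theorem evenWordCount_four (N : ℕ) : (evenWordCount 4 N : R) = 3 * N ^ 2 - 2 * N := by
  induction N with
  | zero => simp [evenWordCount_succ_zero]
  | succ N ih =>
    rw [evenWordCount_succ]
    norm_num [sum_range_succ, Nat.choose, evenWordCount_zero_left, ih,
      evenWordCount_two]
    ring

theorem evenWordCount_six (N : ℕ) :
    (evenWordCount 6 N : R) = 15 * N ^ 3 - 30 * N ^ 2 + 16 * N := by
  induction N with
  | zero => simp [evenWordCount_succ_zero]
  | succ N ih =>
    rw [evenWordCount_succ]
    norm_num [sum_range_succ, Nat.choose, evenWordCount_zero_left, ih,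
      evenWordCount_two, evenWordCount_four]
    ring

theorem evenWordCount_eight (N : ℕ) :
    (evenWordCount 8 N : R) = 105 * N ^ 4 - 420 * N ^ 3 + 588 * N ^ 2 - 272 * N := by
  induction N with
  | zero => simp [evenWordCount_succ_zero]
  | succ N ih =>
    rw [evenWordCount_succ]
    norm_num [sum_range_succ, Nat.choose, evenWordCount_zero_left, ih,
      evenWordCount_two, evenWordCount_four, evenWordCount_six]
    ring

theorem evenWordCount_ten (N : ℕ) :
    (evenWordCount 10 N : R)
      = 945 * N ^ 5 - 6300 * N ^ 4 + 16380 * N ^ 3 - 18960 * N ^ 2 + 7936 * N := by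
  induction N with
  | zero => simp [evenWordCount_succ_zero]
  | succ N ih =>
    rw [evenWordCount_succ]
    norm_num [sum_range_succ, Nat.choose, evenWordCount_zero_left, ih,
      evenWordCount_two, evenWordCount_four, evenWordCount_six, evenWordCount_eight]
    ring

end ClosedForms

theorem Algebra.TensorProduct.list_prod_map_tmul {R A B ι : Type*} [CommSemiring R] [Semiring A]
    [Semiring B] [Algebra R A] [Algebra R B] (f : ι → A) (g : ι → B) (l : List ι) :
    (l.map fun i => f i ⊗ₜ[R] g i).prod = (l.map f).prod ⊗ₜ[R] (l.map g).prod := by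
  induction l with
  | nil => rfl
  | cons a l ih => simp [ih]

section Clifford

variable {r : ℕ}

theorem Γgen_mul_self (i : Fin (2 * r)) : Γgen r i * Γgen r i = 1 := by
  rw [Γgen, CliffordAlgebra.ι_sq_scalar,
    show Qf r (Pi.single i 1) = 1 by
      simp [Qf, QuadraticMap.weightedSumSquares_apply, Pi.single_apply], map_one]

theorem Γgen_mul_Γgen_of_ne {i j : Fin (2 * r)} (h : i ≠ j) :
    Γgen r i * Γgen r j = -(Γgen r j * Γgen r i) := by
  have hpolar : QuadraticMap.polar (Qf r) (Pi.single i 1) (Pi.single j 1) = 0 := by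
    simp [QuadraticMap.polar, Qf, QuadraticMap.weightedSumSquares_apply, Pi.single_apply, mul_add,
      sum_add_distrib, sum_ite_eq', h, h.symm]
  rw [eq_neg_iff_add_eq_zero, Γgen, Γgen, CliffordAlgebra.ι_mul_ι_add_swap, hpolar, map_zero]

theorem Γgen_mul_prod_map_Γgen (b : Fin (2 * r)) (l : List (Fin (2 * r))) :
    Γgen r b * (l.map (Γgen r)).prod
      = (-1 : ℂ) ^ (l.length + l.count b) • ((l.map (Γgen r)).prod * Γgen r b) := by
  induction l with
  | nil => simp
  | cons a l ih =>
    rw [List.map_cons, List.prod_cons, ← mul_assoc]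
    rcases eq_or_ne b a with rfl | hba
    · rw [List.count_cons_self, List.length_cons, Γgen_mul_self, one_mul,
        show (-1 : ℂ) ^ (l.length + 1 + (l.count b + 1)) = (-1) ^ (l.length + l.count b) by ring,
        ih, smul_mul_assoc, mul_assoc, Γgen_mul_self, mul_one, smul_smul, ← mul_pow, neg_one_mul,
        neg_neg, one_pow, one_smul]
    · rw [Γgen_mul_Γgen_of_ne hba, neg_mul, mul_assoc, ih, mul_smul_comm, ← mul_assoc,
        List.count_cons_of_ne hba.symm, List.length_cons,
        show (-1 : ℂ) ^ (l.length + 1 + l.count b) = -(-1) ^ (l.length + l.count b) by ring,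
        neg_smul]

theorem trace_prod_map_Γgen_eq_zero {n : Type*} [Fintype n] [DecidableEq n]
    (φ : Cl r →ₐ[ℂ] Matrix n n ℂ) {l : List (Fin (2 * r))} (hl : ∃ i, Odd (l.count i)) :
    (φ (l.map (Γgen r)).prod).trace = 0 := by
  set g := (l.map (Γgen r)).prod
  have hconj : ∀ b, (φ g).trace = (-1) ^ (l.length + l.count b) * (φ g).trace := fun b => by
    calc (φ g).trace = (φ (g * Γgen r b) * φ (Γgen r b)).trace := by
          rw [← map_mul, mul_assoc, Γgen_mul_self, mul_one]
      _ = (φ (Γgen r b * g * Γgen r b)).trace := by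
          rw [Matrix.trace_mul_comm, ← map_mul, mul_assoc]
      _ = _ := by
          rw [Γgen_mul_prod_map_Γgen, smul_mul_assoc, mul_assoc, Γgen_mul_self, mul_one, map_smul,
            Matrix.trace_smul, smul_eq_mul]
  -- If `|l|` is odd, not all of the `2r` counts can be odd.
  have hb : ∃ b, Odd (l.length + l.count b) := by
    rcases Nat.even_or_odd l.length with hlen | hlen
    · obtain ⟨i, hi⟩ := hl
      exact ⟨i, hlen.add_odd hi⟩
    · by_contra! hall
      have heven : Even (∑ b, (l.count b + 1)) :=
        even_sum _ fun b _ => Nat.even_add_one.2 fun hb => hall b (hlen.add_even hb)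
      rw [sum_add_distrib, List.sum_count_eq_length, sum_const, card_univ, Fintype.card_fin,
        smul_eq_mul, mul_one] at heven
      exact Nat.not_even_iff_odd.2 hlen ((Nat.even_add.1 heven).2 (even_two_mul r))
  obtain ⟨b, hb⟩ := hb
  have := hconj b
  rwa [hb.neg_one_pow, neg_one_mul, self_eq_neg] at this

end Clifford

section Casimir

variable {r : ℕ}

theorem Ik_one : Ik r 1 = ∑ i, Γgen r i ⊗ₜ[ℂ] Γgen r i := by
  rw [Ik, ← (Equiv.funUnique (Fin 1) (Fin (2 * r))).symm.sum_comp]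
  simp [Γbr]

theorem Γbr_two (i : Fin 2 → Fin (2 * r)) :
    Γbr r 2 i = Γgen r (i 0) * Γgen r (i 1) - if i 0 = i 1 then 1 else 0 := by
  have hperms : (univ : Finset (Equiv.Perm (Fin 2))) = {1, Equiv.swap 0 1} := by decide
  rw [Γbr, hperms, sum_pair (by decide)]
  split_ifs with h
  · simp [h, Γgen_mul_self]
  · simp [Γgen_mul_Γgen_of_ne (Ne.symm h), ← two_smul ℂ, smul_smul]

theorem Ik_two : Ik r 2 = Ik r 1 ^ 2 - 2 * r := by
  have hterm : ∀ i : Fin 2 → Fin (2 * r), Γbr r 2 i ⊗ₜ[ℂ] Γbr r 2 i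
      = (Γgen r (i 0) ⊗ₜ[ℂ] Γgen r (i 0)) * (Γgen r (i 1) ⊗ₜ[ℂ] Γgen r (i 1))
        - if i 0 = i 1 then 1 else 0 := fun i => by
    rw [Γbr_two, Algebra.TensorProduct.tmul_mul_tmul]
    split_ifs with h
    · rw [h, Γgen_mul_self, sub_self, TensorProduct.zero_tmul, Algebra.TensorProduct.one_def,
        sub_self]
    · simp only [sub_zero]
  have hdiag : ∑ i : Fin 2 → Fin (2 * r), (if i 0 = i 1 then 1 else 0 : Cl r ⊗[ℂ] Cl r)
      = 2 * r := by
    rw [← (piFinTwoEquiv _).symm.sum_comp, Fintype.sum_prod_type]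
    simp
  rw [Ik, sum_congr rfl fun i _ => hterm i, sum_sub_distrib, hdiag, Ik_one,
    Fintype.sum_pow_eq_sum_prod_map_ofFn]
  simp [List.ofFn_succ]

end Casimir

section Trace

variable {r : ℕ} {n : Type*} [Fintype n] [DecidableEq n] (φ : Cl r →ₐ[ℂ] Matrix n n ℂ)
  (Φ : Cl r ⊗[ℂ] Cl r →ₐ[ℂ] Matrix (n × n) (n × n) ℂ)
  (hΦ : ∀ a b : Cl r, Φ (a ⊗ₜ[ℂ] b) = Matrix.kroneckerMap (· * ·) (φ a) (φ b))
include hΦ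

theorem trace_prod_map_tmul_self_Γgen (l : List (Fin (2 * r))) :
    (Φ (l.map fun i => Γgen r i ⊗ₜ[ℂ] Γgen r i).prod).trace
      = if ∀ i, Even (l.count i) then (Fintype.card n : ℂ) ^ 2 else 0 := by
  split_ifs with heven
  · have hcomm : ∀ i j : Fin (2 * r),
        Commute (Γgen r i ⊗ₜ[ℂ] Γgen r i) (Γgen r j ⊗ₜ[ℂ] Γgen r j) := fun i j => by
      rcases eq_or_ne i j with rfl | hij
      · rfl
      · simp only [Commute, SemiconjBy, Algebra.TensorProduct.tmul_mul_tmul,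
          Γgen_mul_Γgen_of_ne hij, TensorProduct.neg_tmul, TensorProduct.tmul_neg, neg_neg]
    have hsq : ∀ i : Fin (2 * r),
        Γgen r i ⊗ₜ[ℂ] Γgen r i * Γgen r i ⊗ₜ[ℂ] Γgen r i = 1 := fun i => by
      rw [Algebra.TensorProduct.tmul_mul_tmul, Γgen_mul_self, Algebra.TensorProduct.one_def]
    rw [List.prod_map_eq_one_of_forall_even_count hcomm hsq l heven, map_one, Matrix.trace_one,
      Fintype.card_prod, Nat.cast_mul, sq]
  · obtain ⟨i, hi⟩ := not_forall.1 heven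
    rw [Algebra.TensorProduct.list_prod_map_tmul, hΦ, Matrix.trace_kronecker,
      trace_prod_map_Γgen_eq_zero φ ⟨i, Nat.not_even_iff_odd.1 hi⟩, zero_mul]

theorem trace_Ik_one_pow (m : ℕ) :
    (Φ (Ik r 1 ^ m)).trace = (Fintype.card n : ℂ) ^ 2 * evenWordCount m (2 * r) := by
  rw [Ik_one, Fintype.sum_pow_eq_sum_prod_map_ofFn, map_sum, Matrix.trace_sum, evenWordCount,
    natCast_card_filter, mul_sum]
  refine sum_congr rfl fun w _ => ?_
  rw [trace_prod_map_tmul_self_Γgen φ Φ hΦ]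
  simp [List.count_ofFn]

theorem trace_sC_pow (k : ℕ) :
    (Φ (sC r ^ k)).trace = (-(16 * (2 * (r : ℂ) - 2))⁻¹) ^ k * ∑ j ∈ range (k + 1),
      (-(2 * (r : ℂ))) ^ (k - j) * k.choose j
        * ((Fintype.card n : ℂ) ^ 2 * evenWordCount (2 * j) (2 * r)) := by
  let T := (Matrix.traceLinearMap _ ℂ ℂ).comp Φ.toLinearMap
  have hsC : sC r
      = (-(16 * (2 * (r : ℂ) - 2))⁻¹) • (Ik r 1 ^ 2 + algebraMap ℂ _ (-(2 * (r : ℂ)))) := by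
    rw [sC, Ik_two, map_neg, map_mul, map_ofNat, map_natCast, ← sub_eq_add_neg]
  change T (sC r ^ k) = _
  rw [hsC, smul_pow, map_smul, LinearMap.map_add_algebraMap_pow, smul_eq_mul]
  congr 1
  refine sum_congr rfl fun j _ => ?_
  rw [smul_eq_mul, ← pow_mul]
  exact congrArg _ (trace_Ik_one_pow φ Φ hΦ (2 * j))

end Trace

/-- traces of powers of the split Casimir element. -/
theorem sC_power_traces (r : ℕ) (hr : 2 ≤ r)
    (φ : Cl r ≃ₐ[ℂ] Matrix (Fin (2^r)) (Fin (2^r)) ℂ)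
    (Φ : Cl r ⊗[ℂ] Cl r →ₐ[ℂ] Matrix (Fin (2^r) × Fin (2^r)) (Fin (2^r) × Fin (2^r)) ℂ)
    (hΦ : ∀ a b : Cl r, Φ (a ⊗ₜ[ℂ] b) = Matrix.kroneckerMap (· * ·) (φ a) (φ b)) :
    Matrix.trace (Φ ((sC r)^2))
        = ((4:ℂ)^r * (r:ℂ) * (2*(r:ℂ)-1)) / (256*((r:ℂ)-1)^2) ∧
    Matrix.trace (Φ ((sC r)^3))
        = -((4:ℂ)^r * (r:ℂ) * (2*(r:ℂ)-1)) / (1024*((r:ℂ)-1)^2) ∧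
    Matrix.trace (Φ ((sC r)^4))
        = ((4:ℂ)^r * (r:ℂ) * (2*(r:ℂ)-1) * (30*(r:ℂ)^2-63*(r:ℂ)+34)) / (2^16*((r:ℂ)-1)^4) ∧
    Matrix.trace (Φ ((sC r)^5))
        = -((4:ℂ)^r * (r:ℂ) * (2*(r:ℂ)-1) * (34*(r:ℂ)^2-89*(r:ℂ)+62)) / (2^17*((r:ℂ)-1)^4) := by
  have hr1 : (r : ℂ) - 1 ≠ 0 := sub_ne_zero.2 (by exact_mod_cast (by omega : r ≠ 1))
  have hdim : (Fintype.card (Fin (2 ^ r)) : ℂ) ^ 2 = 4 ^ r := by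
    rw [Fintype.card_fin, Nat.cast_pow, ← pow_mul, mul_comm, pow_mul]
    norm_num
  simp only [trace_sC_pow (φ : Cl r →ₐ[ℂ] _) Φ hΦ, hdim, sum_range_succ, sum_range_zero,
    Nat.choose, Nat.reduceMul, evenWordCount_zero_left, evenWordCount_two, evenWordCount_four,
    evenWordCount_six, evenWordCount_eight, evenWordCount_ten]
  refine ⟨?_, ?_, ?_, ?_⟩ <;> (field_simp; push_cast; ring)
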